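/- Let Ω = {1, 2} and let s be the two-circle scoring rule: identifying each probability p with (p({1}), p({2})) ∈ ℝ² and letting θ(p) ∈ [0, π/2] be its angle with the x-axis, s(p) = (1 + cos θ(p), sin θ(p)) if θ(p) ≤ π/4 and s(p) = (cos θ(p), 1 + sin θ(p)) if θ(p) > π/4. Let F = { s(p) : p a probability function } ⊆ ℝ². Then every point of the open line segment joining B = (1 + √2/2, √2/2) and C = (√2/2, 1 + √2/2) lies in ∂⁺ Conv F but not in the closure of F; in particular, F is not dense in ∂⁺ Conv F. -/

import Mathlib

/-- The two-circle scoring rule on `Ω = {1,2}`, applied to the probability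
`(a, b)`.  With `r = √(a² + b²)` we have `cos θ(p) = a/r` and `sin θ(p) = b/r`,
and `θ(p) ≤ π/4 ↔ b ≤ a`; so the score is `(1 + cos θ, sin θ)` when `θ ≤ π/4`
and `(cos θ, 1 + sin θ)` when `θ > π/4`. -/
noncomputable def twoCircleScore (a b : ℝ) : ℝ × ℝ :=
  if b ≤ a then
    (1 + a / Real.sqrt (a ^ 2 + b ^ 2), b / Real.sqrt (a ^ 2 + b ^ 2))
  else
    (a / Real.sqrt (a ^ 2 + b ^ 2), 1 + b / Real.sqrt (a ^ 2 + b ^ 2))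

/-- The set `F` of scores of probability functions on `Ω = {1,2}`. -/
def twoCircleF : Set (ℝ × ℝ) :=
  {z | ∃ a b : ℝ, 0 ≤ a ∧ 0 ≤ b ∧ a + b = 1 ∧ z = twoCircleScore a b}

/-- The positive-facing boundary `∂⁺ G` of a subset of the plane. -/
def posFacing2 (G : Set (ℝ × ℝ)) : Set (ℝ × ℝ) :=
  {z | z ∈ frontier G ∧ ∃ v : ℝ × ℝ, 0 < v.1 ∧ 0 < v.2 ∧
    ∀ w ∈ G, v.1 * w.1 + v.2 * w.2 ≤ v.1 * z.1 + v.2 * z.2}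

/-- `A` is dense in `B`: every open set meeting `B` meets `A`. -/
def DenseIn {X : Type*} [TopologicalSpace X] (A B : Set X) : Prop :=
  ∀ U : Set X, IsOpen U → (U ∩ B).Nonempty → (U ∩ A).Nonempty

lemma sqrt_half : Real.sqrt (1/2 : ℝ) = Real.sqrt 2 / 2 := by
  have h := Real.sq_sqrt (show (0:ℝ) ≤ 2 by norm_num)
  rw [show (1/2:ℝ) = (Real.sqrt 2/2)^2 by rw [div_pow, h]; norm_num,
    Real.sqrt_sq (by positivity)]

lemma half_div : (1/2 : ℝ) / (Real.sqrt 2 / 2) = Real.sqrt 2 / 2 := by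
  have h := Real.sq_sqrt (show (0:ℝ) ≤ 2 by norm_num)
  have h2 : (0:ℝ) < Real.sqrt 2 := by positivity
  field_simp
  linarith [h]

lemma rpos {a b : ℝ} (ha : 0 ≤ a) (hb : 0 ≤ b) (hab : a + b = 1) :
    0 < Real.sqrt (a ^ 2 + b ^ 2) := by
  apply Real.sqrt_pos.2
  nlinarith [sq_nonneg (a - b)]

lemma keySum : ∀ w ∈ twoCircleF, w.1 + w.2 ≤ 1 + Real.sqrt 2 := by
  rintro w ⟨a, b, ha, hb, hab, rfl⟩
  have hr := rpos ha hb hab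
  have h2 : (1:ℝ) ≤ Real.sqrt 2 * Real.sqrt (a ^ 2 + b ^ 2) := by
    rw [← Real.sqrt_mul (by norm_num)]
    rw [show (1:ℝ) = Real.sqrt 1 from Real.sqrt_one.symm]
    apply Real.sqrt_le_sqrt; nlinarith [sq_nonneg (a - b)]
  have h3 : a / Real.sqrt (a ^ 2 + b ^ 2) + b / Real.sqrt (a ^ 2 + b ^ 2)
      ≤ Real.sqrt 2 := by
    rw [← add_div, div_le_iff₀ hr, hab]; nlinarith
  unfold twoCircleScore
  split <;> simp only <;> linarith

lemma keyCoord : ∀ w ∈ twoCircleF,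
    1 + Real.sqrt 2 / 2 ≤ w.1 ∨ 1 + Real.sqrt 2 / 2 ≤ w.2 := by
  rintro w ⟨a, b, ha, hb, hab, rfl⟩
  have hr := rpos ha hb hab
  have hs2 := Real.sq_sqrt (show (0:ℝ) ≤ 2 by norm_num)
  have hs2' : (0:ℝ) < Real.sqrt 2 := by positivity
  unfold twoCircleScore
  split
  case isTrue h =>
    left
    simp only
    have h1 : Real.sqrt (a ^ 2 + b ^ 2) ≤ Real.sqrt 2 * a := by
      rw [show Real.sqrt 2 * a = Real.sqrt (2 * a ^ 2) by
        rw [Real.sqrt_mul (by norm_num), Real.sqrt_sq ha]]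
      apply Real.sqrt_le_sqrt; nlinarith
    have : Real.sqrt 2 / 2 ≤ a / Real.sqrt (a ^ 2 + b ^ 2) := by
      rw [le_div_iff₀ hr]; nlinarith
    linarith
  case isFalse h =>
    right
    simp only
    push_neg at h
    have h1 : Real.sqrt (a ^ 2 + b ^ 2) ≤ Real.sqrt 2 * b := by
      rw [show Real.sqrt 2 * b = Real.sqrt (2 * b ^ 2) by
        rw [Real.sqrt_mul (by norm_num), Real.sqrt_sq hb]]
      apply Real.sqrt_le_sqrt; nlinarith
    have : Real.sqrt 2 / 2 ≤ b / Real.sqrt (a ^ 2 + b ^ 2) := by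
      rw [le_div_iff₀ hr]; nlinarith
    linarith

lemma B_mem : ((1 + Real.sqrt 2 / 2, Real.sqrt 2 / 2) : ℝ × ℝ) ∈ twoCircleF := by
  refine ⟨1/2, 1/2, by norm_num, by norm_num, by norm_num, ?_⟩
  unfold twoCircleScore
  rw [if_pos le_rfl]
  norm_num
  ring

lemma C_closure :
    ((Real.sqrt 2 / 2, 1 + Real.sqrt 2 / 2) : ℝ × ℝ) ∈ closure twoCircleF := by
  have hs : Real.sqrt ((1/2:ℝ) ^ 2 + (1 - 1/2) ^ 2) ≠ 0 := by
    positivity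
  have h1 : ContinuousAt (fun a : ℝ => Real.sqrt (a ^ 2 + (1 - a) ^ 2)) (1/2) :=
    Continuous.continuousAt (by continuity)
  have h2 : ContinuousAt (fun a : ℝ => a / Real.sqrt (a ^ 2 + (1 - a) ^ 2)) (1/2) :=
    ContinuousAt.div continuousAt_id h1 hs
  have h3 : ContinuousAt
      (fun a : ℝ => 1 + (1 - a) / Real.sqrt (a ^ 2 + (1 - a) ^ 2)) (1/2) :=
    ContinuousAt.add continuousAt_const
      (ContinuousAt.div (continuousAt_const.sub continuousAt_id) h1 hs)
  have hval : ((fun a : ℝ => ((a / Real.sqrt (a ^ 2 + (1 - a) ^ 2),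
      1 + (1 - a) / Real.sqrt (a ^ 2 + (1 - a) ^ 2)) : ℝ × ℝ)) (1/2))
      = ((Real.sqrt 2 / 2, 1 + Real.sqrt 2 / 2) : ℝ × ℝ) := by
    simp only
    norm_num
    all_goals ring
  have key : Filter.Tendsto
      (fun a : ℝ => ((a / Real.sqrt (a ^ 2 + (1 - a) ^ 2),
        1 + (1 - a) / Real.sqrt (a ^ 2 + (1 - a) ^ 2)) : ℝ × ℝ))
      (nhdsWithin (1/2) (Set.Ioo 0 (1/2)))
      (nhds ((Real.sqrt 2 / 2, 1 + Real.sqrt 2 / 2) : ℝ × ℝ)) := by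
    rw [← hval]
    exact ((h2.prodMk h3).tendsto).mono_left nhdsWithin_le_nhds
  have hne : (nhdsWithin (1/2 : ℝ) (Set.Ioo 0 (1/2))).NeBot := by
    apply mem_closure_iff_nhdsWithin_neBot.mp
    rw [closure_Ioo (by norm_num : (0:ℝ) ≠ 1/2)]
    exact ⟨by norm_num, le_rfl⟩
  apply mem_closure_of_tendsto key
  filter_upwards [self_mem_nhdsWithin] with a ha
  refine ⟨a, 1 - a, le_of_lt ha.1, by linarith [ha.2], by ring, ?_⟩
  unfold twoCircleScore
  rw [if_neg (by linarith [ha.1, ha.2])]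

lemma hull_bound : convexHull ℝ twoCircleF ⊆ {w : ℝ × ℝ | w.1 + w.2 ≤ 1 + Real.sqrt 2} := by
  have hconv : Convex ℝ {w : ℝ × ℝ | w.1 + w.2 ≤ 1 + Real.sqrt 2} := by
    intro x hx y hy a b ha hb hab
    simp only [Set.mem_setOf_eq, Prod.fst_add, Prod.snd_add, Prod.smul_fst,
      Prod.smul_snd, smul_eq_mul] at hx hy ⊢
    have h3 : a * (1 + Real.sqrt 2) + b * (1 + Real.sqrt 2) = 1 + Real.sqrt 2 := by
      rw [← add_mul, hab, one_mul]
    nlinarith [mul_le_mul_of_nonneg_left hx ha, mul_le_mul_of_nonneg_left hy hb, h3]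
  exact convexHull_min keySum hconv

lemma closureK : closure twoCircleF ⊆
    {w : ℝ × ℝ | 1 + Real.sqrt 2 / 2 ≤ w.1} ∪ {w : ℝ × ℝ | 1 + Real.sqrt 2 / 2 ≤ w.2} := by
  apply closure_minimal
  · intro w hw
    rcases keyCoord w hw with h | h
    · exact Or.inl h
    · exact Or.inr h
  · exact (isClosed_le continuous_const continuous_fst).union
      (isClosed_le continuous_const continuous_snd)

theorem stmt12 :
    (∀ z ∈ openSegment ℝ
        ((1 + Real.sqrt 2 / 2, Real.sqrt 2 / 2) : ℝ × ℝ)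
        ((Real.sqrt 2 / 2, 1 + Real.sqrt 2 / 2) : ℝ × ℝ),
      z ∈ posFacing2 (convexHull ℝ twoCircleF) ∧ z ∉ closure twoCircleF) ∧
    ¬ DenseIn twoCircleF (posFacing2 (convexHull ℝ twoCircleF)) := by
  have main : ∀ z ∈ openSegment ℝ
      ((1 + Real.sqrt 2 / 2, Real.sqrt 2 / 2) : ℝ × ℝ)
      ((Real.sqrt 2 / 2, 1 + Real.sqrt 2 / 2) : ℝ × ℝ),
      z ∈ posFacing2 (convexHull ℝ twoCircleF) ∧ z ∉ closure twoCircleF := by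
    rintro z ⟨t, u, ht, hu, htu, rfl⟩
    set B : ℝ × ℝ := (1 + Real.sqrt 2 / 2, Real.sqrt 2 / 2) with hB
    set C : ℝ × ℝ := (Real.sqrt 2 / 2, 1 + Real.sqrt 2 / 2) with hC
    have hz1 : (t • B + u • C).1 = t + Real.sqrt 2 / 2 := by
      simp [hB, hC]
      linear_combination (Real.sqrt 2 / 2 + 1) * htu - htu
    have hz2 : (t • B + u • C).2 = u + Real.sqrt 2 / 2 := by
      simp [hB, hC]
      linear_combination (Real.sqrt 2 / 2 + 1) * htu - htu
    have hzsum : (t • B + u • C).1 + (t • B + u • C).2 = 1 + Real.sqrt 2 := by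
      rw [hz1, hz2]; linarith
    have hclos : t • B + u • C ∈ closure (convexHull ℝ twoCircleF) := by
      have hconv : Convex ℝ (closure (convexHull ℝ twoCircleF)) :=
        (convex_convexHull ℝ _).closure
      exact hconv (subset_closure (subset_convexHull ℝ _ B_mem))
        (closure_mono (subset_convexHull ℝ _) C_closure) ht.le hu.le htu
    have hnotint : t • B + u • C ∉ interior (convexHull ℝ twoCircleF) := by
      intro hmem
      obtain ⟨ε, hε, hball⟩ := Metric.isOpen_iff.mp isOpen_interior _ hmem
      have hw : ((t • B + u • C).1 + ε / 2, (t • B + u • C).2) ∈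
          Metric.ball (t • B + u • C) ε := by
        rw [Metric.mem_ball, Prod.dist_eq]
        simp [Real.dist_eq, abs_of_nonneg hε.le]
        linarith
      have h2 := hull_bound (interior_subset (hball hw))
      simp only [Set.mem_setOf_eq] at h2
      linarith
    refine ⟨⟨⟨hclos, hnotint⟩, (1, 1), one_pos, one_pos, ?_⟩, ?_⟩
    · intro w hw
      have h2 := hull_bound hw
      simp only [Set.mem_setOf_eq] at h2
      simp only [one_mul]
      rw [hz1, hz2]
      linarith
    · intro hcl
      rcases closureK hcl with h | h <;> simp only [Set.mem_setOf_eq] at h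
      · rw [hz1] at h; linarith
      · rw [hz2] at h; linarith
  refine ⟨main, ?_⟩
  intro hd
  set B : ℝ × ℝ := (1 + Real.sqrt 2 / 2, Real.sqrt 2 / 2) with hB
  set C : ℝ × ℝ := (Real.sqrt 2 / 2, 1 + Real.sqrt 2 / 2) with hC
  set z₀ : ℝ × ℝ := (1/2 : ℝ) • B + (1/2 : ℝ) • C with hz₀
  have hseg : z₀ ∈ openSegment ℝ B C :=
    ⟨1/2, 1/2, by norm_num, by norm_num, by norm_num, rfl⟩
  have h1 : z₀.1 = 1/2 + Real.sqrt 2 / 2 := by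
    simp [hz₀, hB, hC]; ring
  have h2 : z₀.2 = 1/2 + Real.sqrt 2 / 2 := by
    simp [hz₀, hB, hC]; ring
  set U : Set (ℝ × ℝ) :=
    {w | w.1 < 1 + Real.sqrt 2 / 2 ∧ w.2 < 1 + Real.sqrt 2 / 2} with hU
  have hUopen : IsOpen U :=
    (isOpen_lt continuous_fst continuous_const).inter
      (isOpen_lt continuous_snd continuous_const)
  have hz₀U : z₀ ∈ U := ⟨by rw [h1]; linarith, by rw [h2]; linarith⟩
  obtain ⟨w, hwU, hwF⟩ := hd U hUopen ⟨z₀, hz₀U, (main z₀ hseg).1⟩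
  rcases keyCoord w hwF with h | h
  · exact absurd hwU.1 (not_lt.2 h)
  · exact absurd hwU.2 (not_lt.2 h)
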